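/- Let d > 0, c₁ > 0, and let ψ : [0,d] → ℝ be twice differentiable with |ψ(z)| < 1 and |ψ''(z)| < c₁ for all z ∈ [0,d]. Let c₂ = d·(1 + 4c₁) + 2. Then for every integer k ≥ 1, every partition 0 < κ₁ < κ₂ < ... < κ_{k+1} ≤ 1, and every r with 1 ≤ r ≤ k, one has ∑_{ν=1}^r ∫₀^d |ψ'(z)| · 𝟙{κ_ν ≤ |ψ(z)| < κ_{ν+1}} dz < c₂ · √(κ_{r+1}). -/

import Mathlib

/-!
Since the bands `κ_ν ≤ |ψ| < κ_{ν+1}` are disjoint, the sum is at most `∫ |ψ'| 𝟙{|ψ| < b}` with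
`b = κ_{r+1}`. Let `G` be a continuous plateau equal to `1` on `[-b, b]` and vanishing off
`(-δ, δ)`, and `F` its primitive, so `|F| ≤ δ`. Integrating `(F(ψ) ψ')' = G(ψ) ψ'² + F(ψ) ψ''`
over `[0, d]`, with `|ψ'| ≤ 2/d + c₁ d` from the mean value theorem, gives
`∫ G(ψ) ψ'² ≤ δ (4 + 3 c₁ d²) / d`. By AM-GM, `|ψ'| 𝟙{|ψ| < b} ≤ G(ψ) ψ'² / (2η) + η / 2`;
the choice `η = c₂ √b / d` and `δ` close enough to `b` finish the proof, because
`4 + 3 c₁ d² < c₂²`.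
-/

open MeasureTheory Set

noncomputable def plateau (b δ t : ℝ) : ℝ := min 1 (max 0 ((δ - |t|) / (δ - b)))

section Plateau

variable {b δ : ℝ}

lemma continuous_plateau : Continuous (plateau b δ) := by
  unfold plateau; fun_prop

lemma plateau_nonneg (t : ℝ) : 0 ≤ plateau b δ t := le_min zero_le_one (le_max_left _ _)

lemma abs_plateau_le_one (t : ℝ) : |plateau b δ t| ≤ 1 := by
  rw [abs_of_nonneg (plateau_nonneg t)]; exact min_le_left _ _

lemma plateau_eq_one (hbδ : b < δ) {t : ℝ} (ht : |t| ≤ b) : plateau b δ t = 1 := by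
  have : 1 ≤ (δ - |t|) / (δ - b) := by rw [le_div_iff₀ (by linarith)]; linarith
  rw [plateau, max_eq_right (by linarith), min_eq_left this]

lemma plateau_eq_zero (hbδ : b < δ) {t : ℝ} (ht : δ ≤ |t|) : plateau b δ t = 0 := by
  have : (δ - |t|) / (δ - b) ≤ 0 := div_nonpos_of_nonpos_of_nonneg (by linarith) (by linarith)
  rw [plateau, max_eq_left this, min_eq_right zero_le_one]

end Plateau

lemma abs_integral_le_of_eq_zero_of_le_abs {G : ℝ → ℝ} {δ : ℝ} (hG : Continuous G)
    (hG1 : ∀ s, |G s| ≤ 1) (hG0 : ∀ s, δ ≤ |s| → G s = 0) (hδ : 0 ≤ δ) (t : ℝ) :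
    |∫ s in (0 : ℝ)..t, G s| ≤ δ := by
  set c := max (-δ) (min δ t)
  have hc : |c| ≤ δ := abs_le.2 ⟨le_max_left _ _, max_le (by linarith) (min_le_left _ _)⟩
  have htail : ∫ s in c..t, G s = 0 := by
    refine intervalIntegral.integral_zero_ae (Filter.Eventually.of_forall fun s hs => hG0 s ?_)
    rw [uIoc, mem_Ioc] at hs
    rw [le_abs']
    grind
  have hinit : |∫ s in (0 : ℝ)..c, G s| ≤ |c| := by
    simpa using intervalIntegral.norm_integral_le_of_norm_le_const (a := 0) (b := c)
      (fun s _ => (Real.norm_eq_abs (G s)).trans_le (hG1 s))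
  rw [← intervalIntegral.integral_add_adjacent_intervals (hG.intervalIntegrable 0 c)
    (hG.intervalIntegrable c t), htail, add_zero]
  exact hinit.trans hc

section
variable {d A c : ℝ} {ψ ψ' ψ'' : ℝ → ℝ}

lemma abs_deriv_le_of_abs_le (hd : 0 < d)
    (hψ' : ∀ z ∈ Icc 0 d, HasDerivWithinAt ψ (ψ' z) (Icc 0 d) z)
    (hψ'' : ∀ z ∈ Icc 0 d, HasDerivWithinAt ψ' (ψ'' z) (Icc 0 d) z)
    (hA : ∀ z ∈ Icc 0 d, |ψ z| ≤ A) (hc : ∀ z ∈ Icc 0 d, |ψ'' z| ≤ c) (hc0 : 0 ≤ c) :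
    ∀ z ∈ Icc 0 d, |ψ' z| ≤ 2 * A / d + c * d := by
  have h0 : (0 : ℝ) ∈ Icc 0 d := left_mem_Icc.2 hd.le
  have hd' : d ∈ Icc 0 d := right_mem_Icc.2 hd.le
  obtain ⟨ξ, hξ, hslope⟩ := exists_hasDerivAt_eq_slope ψ ψ' hd
    (fun z hz => (hψ' z hz).continuousWithinAt)
    (fun z hz => (hψ' z (Ioo_subset_Icc_self hz)).hasDerivAt (Icc_mem_nhds hz.1 hz.2))
  have hξ_le : |ψ' ξ| ≤ 2 * A / d := by
    rw [hslope, sub_zero, abs_div, abs_of_pos hd]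
    gcongr
    calc |ψ d - ψ 0| ≤ |ψ d| + |ψ 0| := abs_sub _ _
      _ ≤ 2 * A := by linarith [hA d hd', hA 0 h0]
  intro z hz
  have hlip : ‖ψ' z - ψ' ξ‖ ≤ c * ‖z - ξ‖ :=
    (convex_Icc 0 d).norm_image_sub_le_of_norm_hasDerivWithin_le hψ'' hc
      (Ioo_subset_Icc_self hξ) hz
  have hzξ : |z - ξ| ≤ d := abs_sub_le_iff.2 ⟨by linarith [hz.2, hξ.1], by linarith [hz.1, hξ.2]⟩
  rw [Real.norm_eq_abs, Real.norm_eq_abs] at hlip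
  calc |ψ' z| ≤ |ψ' ξ| + |ψ' z - ψ' ξ| := by linarith [abs_sub_abs_le_abs_sub (ψ' z) (ψ' ξ)]
    _ ≤ 2 * A / d + c * d := add_le_add hξ_le (hlip.trans (mul_le_mul_of_nonneg_left hzξ hc0))

end

section
variable {d M c B : ℝ} {ψ ψ' ψ'' G F : ℝ → ℝ}

lemma integral_comp_mul_deriv_sq_le (hd : 0 ≤ d)
    (hψ' : ∀ z ∈ Icc 0 d, HasDerivWithinAt ψ (ψ' z) (Icc 0 d) z)
    (hψ'' : ∀ z ∈ Icc 0 d, HasDerivWithinAt ψ' (ψ'' z) (Icc 0 d) z)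
    (hM : ∀ z ∈ Icc 0 d, |ψ' z| ≤ M) (hc : ∀ z ∈ Icc 0 d, |ψ'' z| ≤ c)
    (hG : Continuous G) (hF : ∀ t, HasDerivAt F (G t) t) (hB : ∀ t, |F t| ≤ B) :
    ∫ z in Icc 0 d, G (ψ z) * ψ' z ^ 2 ≤ 2 * B * M + B * c * d := by
  have hψc : ContinuousOn ψ (Icc 0 d) := fun z hz => (hψ' z hz).continuousWithinAt
  have hψ'c : ContinuousOn ψ' (Icc 0 d) := fun z hz => (hψ'' z hz).continuousWithinAt
  have hB0 : 0 ≤ B := (abs_nonneg _).trans (hB 0)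
  set Φ : ℝ → ℝ := fun z => F (ψ z) * ψ' z + B * c * z
  have hΦ : ∀ z ∈ Ioo 0 d, HasDerivAt Φ (G (ψ z) * ψ' z * ψ' z + F (ψ z) * ψ'' z + B * c) z := by
    intro z hz
    have hz' := Icc_mem_nhds hz.1 hz.2
    have := (((hF (ψ z)).comp z ((hψ' z (Ioo_subset_Icc_self hz)).hasDerivAt hz')).mul
      ((hψ'' z (Ioo_subset_Icc_self hz)).hasDerivAt hz')).add ((hasDerivAt_id z).const_mul (B * c))
    exact this.congr_deriv (by simp)
  have hlower : ∀ z ∈ Ioo 0 d,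
      G (ψ z) * ψ' z ^ 2 ≤ G (ψ z) * ψ' z * ψ' z + F (ψ z) * ψ'' z + B * c := by
    intro z hz
    have : |F (ψ z) * ψ'' z| ≤ B * c := by
      rw [abs_mul]; exact mul_le_mul (hB _) (hc z (Ioo_subset_Icc_self hz)) (abs_nonneg _) hB0
    nlinarith [neg_abs_le (F (ψ z) * ψ'' z)]
  have hends : ∀ z ∈ Icc 0 d, |F (ψ z) * ψ' z| ≤ B * M := fun z hz => by
    rw [abs_mul]; exact mul_le_mul (hB _) (hM z hz) (abs_nonneg _) hB0
  have hFc : Continuous F := continuous_iff_continuousAt.2 fun t => (hF t).continuousAt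
  have hFTC := intervalIntegral.integral_le_sub_of_hasDeriv_right_of_le (g := Φ)
    (φ := fun z => G (ψ z) * ψ' z ^ 2) hd
    (((hFc.comp_continuousOn hψc).mul hψ'c).add (by fun_prop))
    (fun z hz => (hΦ z hz).hasDerivWithinAt)
    ((hG.comp_continuousOn hψc).mul (hψ'c.pow 2)).integrableOn_Icc hlower
  rw [intervalIntegral.integral_of_le hd, ← integral_Icc_eq_integral_Ioc] at hFTC
  have := abs_le.1 (hends d (right_mem_Icc.2 hd))
  have := abs_le.1 (hends 0 (left_mem_Icc.2 hd))
  linarith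
end

section
variable {d b E η : ℝ} {ψ ψ' G : ℝ → ℝ}

lemma integral_ite_abs_le_of_integral_mul_sq_le (hd : 0 ≤ d) (hη : 0 < η)
    (hψ : ContinuousOn ψ (Icc 0 d)) (hψ' : ContinuousOn ψ' (Icc 0 d))
    (hG : Continuous G) (hG0 : ∀ t, 0 ≤ G t) (hG1 : ∀ t, |t| ≤ b → G t = 1)
    (hE : ∫ z in Icc 0 d, G (ψ z) * ψ' z ^ 2 ≤ E) :
    ∫ z in Icc 0 d, (if |ψ z| < b then |ψ' z| else 0) ≤ E / (2 * η) + η * d / 2 := by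
  have hGψ : IntegrableOn (fun z => G (ψ z) * ψ' z ^ 2) (Icc 0 d) :=
    ((hG.comp_continuousOn hψ).mul (hψ'.pow 2)).integrableOn_Icc
  have hpoint : ∀ z, (if |ψ z| < b then |ψ' z| else 0) ≤
      (2 * η)⁻¹ * (G (ψ z) * ψ' z ^ 2) + η / 2 := by
    intro z
    split_ifs with h
    · have := two_mul_le_add_sq η |ψ' z|
      rw [hG1 _ h.le, one_mul, ← sq_abs (ψ' z)]
      field_simp
      linarith
    · have := hG0 (ψ z)
      positivity
  calc ∫ z in Icc 0 d, (if |ψ z| < b then |ψ' z| else 0)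
      ≤ ∫ z in Icc 0 d, ((2 * η)⁻¹ * (G (ψ z) * ψ' z ^ 2) + η / 2) :=
        integral_mono_of_nonneg (Filter.Eventually.of_forall fun z => by
          dsimp only; split_ifs <;> positivity)
          ((hGψ.const_mul _).add (integrableOn_const measure_Icc_lt_top.ne))
          (Filter.Eventually.of_forall hpoint)
    _ = (2 * η)⁻¹ * (∫ z in Icc 0 d, G (ψ z) * ψ' z ^ 2) + η * d / 2 := by
        rw [integral_add (hGψ.const_mul _) (integrableOn_const measure_Icc_lt_top.ne),
          integral_const_mul, setIntegral_const, Real.volume_real_Icc_of_le hd, smul_eq_mul]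
        ring
    _ ≤ E / (2 * η) + η * d / 2 := by
        rw [div_eq_inv_mul E]
        gcongr

lemma integrableOn_ite_abs {p : ℝ → Prop} [DecidablePred p] (hp : MeasurableSet {x | p x})
    (hψ : ContinuousOn ψ (Icc 0 d)) (hψ' : ContinuousOn ψ' (Icc 0 d)) :
    IntegrableOn (fun z => if p (ψ z) then |ψ' z| else 0) (Icc 0 d) := by
  have hmeas : Measurable fun q : ℝ × ℝ => if p q.1 then |q.2| else 0 :=
    Measurable.ite (measurable_fst hp) measurable_snd.abs measurable_const
  refine hψ'.abs.integrableOn_Icc.mono'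
    (hmeas.comp_aemeasurable ((hψ.aemeasurable measurableSet_Icc).prodMk
      (hψ'.aemeasurable measurableSet_Icc))).aestronglyMeasurable
    (Filter.Eventually.of_forall fun z => ?_)
  split_ifs <;> simp

end

lemma le_of_forall_Icc_le_succ {κ : ℕ → ℝ} {r : ℕ}
    (hκ : ∀ ν ∈ Finset.Icc 1 r, κ ν ≤ κ (ν + 1)) :
    κ 1 ≤ κ (r + 1) := by
  induction r with
  | zero => rfl
  | succ n ih =>
    exact (ih fun ν hν => hκ ν (Finset.Icc_subset_Icc_right n.le_succ hν)).trans
      (hκ (n + 1) (Finset.mem_Icc.2 ⟨n.succ_pos, le_rfl⟩))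

lemma sum_ite_le_ite_lt {κ : ℕ → ℝ} {t A : ℝ} (hA : 0 ≤ A) {r : ℕ}
    (hκ : ∀ ν ∈ Finset.Icc 1 r, κ ν ≤ κ (ν + 1)) :
    ∑ ν ∈ Finset.Icc 1 r, (if κ ν ≤ t ∧ t < κ (ν + 1) then A else 0) ≤
      if t < κ (r + 1) then A else 0 := by
  induction r with
  | zero => simp only [Finset.Icc_eq_empty_of_lt zero_lt_one, Finset.sum_empty]; positivity
  | succ n ih =>
    have ih := ih fun ν hν => hκ ν (Finset.Icc_subset_Icc_right n.le_succ hν)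
    have hstep := hκ (n + 1) (Finset.mem_Icc.2 ⟨n.succ_pos, le_rfl⟩)
    rw [Finset.sum_Icc_succ_top (Nat.le_add_left 1 n)]
    by_cases ht : t < κ (n + 1)
    · simp only [ht, if_true, not_le.2 ht, false_and, if_false, add_zero] at ih ⊢
      rwa [if_pos (ht.trans_le hstep)]
    · simp only [ht, if_false] at ih
      have hsum : ∑ ν ∈ Finset.Icc 1 n, (if κ ν ≤ t ∧ t < κ (ν + 1) then A else 0) = 0 :=
        le_antisymm ih (Finset.sum_nonneg fun ν _ => by positivity)
      simp only [hsum, zero_add, not_lt.1 ht, true_and, le_refl]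

lemma four_add_three_mul_sq_lt_sq {d c : ℝ} (hd : 0 < d) (hc : 0 ≤ c) :
    4 + 3 * c * d ^ 2 < (d * (1 + 4 * c) + 2) ^ 2 := by
  nlinarith [mul_nonneg hc (sq_nonneg d), mul_nonneg (mul_nonneg hc hc) (sq_nonneg d),
    mul_nonneg hc hd.le]

lemma integral_ite_abs_deriv_lt {d c₁ b : ℝ} {ψ ψ' ψ'' : ℝ → ℝ} (hd : 0 < d) (hc₁ : 0 ≤ c₁)
    (hψ' : ∀ z ∈ Icc 0 d, HasDerivWithinAt ψ (ψ' z) (Icc 0 d) z)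
    (hψ'' : ∀ z ∈ Icc 0 d, HasDerivWithinAt ψ' (ψ'' z) (Icc 0 d) z)
    (hψ : ∀ z ∈ Icc 0 d, |ψ z| ≤ 1) (hψ''c : ∀ z ∈ Icc 0 d, |ψ'' z| ≤ c₁) (hb : 0 < b) :
    ∫ z in Icc 0 d, (if |ψ z| < b then |ψ' z| else 0) <
      (d * (1 + 4 * c₁) + 2) * Real.sqrt b := by
  set c₂ := d * (1 + 4 * c₁) + 2
  set K := 4 + 3 * c₁ * d ^ 2
  have hK : 0 < K := by positivity
  have hKc₂ : K < c₂ ^ 2 := four_add_three_mul_sq_lt_sq hd hc₁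
  -- any `δ` strictly between `b` and `c₂² b / K` works
  set δ := b * (K + c₂ ^ 2) / (2 * K)
  have hbδ : b < δ := by rw [lt_div_iff₀ (by positivity)]; nlinarith
  have hδK : δ * K < (c₂ * Real.sqrt b) ^ 2 := by
    have : δ * K = b * (K + c₂ ^ 2) / 2 := by simp only [δ]; field_simp
    rw [mul_pow, Real.sq_sqrt hb.le]
    nlinarith
  have hM := abs_deriv_le_of_abs_le hd hψ' hψ'' hψ hψ''c hc₁
  have hE := integral_comp_mul_deriv_sq_le hd.le hψ' hψ'' hM hψ''c continuous_plateau
    (fun t => (continuous_plateau.integral_hasStrictDerivAt 0 t).hasDerivAt)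
    (abs_integral_le_of_eq_zero_of_le_abs continuous_plateau abs_plateau_le_one
      (fun _ => plateau_eq_zero hbδ) (hb.trans hbδ).le)
  have hη : 0 < c₂ * Real.sqrt b / d := by positivity
  have hψc : ContinuousOn ψ (Icc 0 d) := fun z hz => (hψ' z hz).continuousWithinAt
  have hψ'c : ContinuousOn ψ' (Icc 0 d) := fun z hz => (hψ'' z hz).continuousWithinAt
  refine (integral_ite_abs_le_of_integral_mul_sq_le hd.le hη hψc hψ'c continuous_plateau
    plateau_nonneg (fun _ => plateau_eq_one hbδ) hE).trans_lt ?_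
  calc _ = δ * K / (2 * (c₂ * Real.sqrt b)) + c₂ * Real.sqrt b / 2 := by
        simp only [K]; field_simp; ring
    _ < c₂ * Real.sqrt b := by
        rw [div_add_div _ _ (by positivity) two_ne_zero, div_lt_iff₀ (by positivity)]
        nlinarith

theorem stmt_10_general (d c₁ : ℝ) (hd : 0 < d) (hc₁ : 0 < c₁)
    (ψ ψ' ψ'' : ℝ → ℝ)
    (hψ' : ∀ z ∈ Set.Icc (0 : ℝ) d, HasDerivWithinAt ψ (ψ' z) (Set.Icc 0 d) z)
    (hψ'' : ∀ z ∈ Set.Icc (0 : ℝ) d, HasDerivWithinAt ψ' (ψ'' z) (Set.Icc 0 d) z)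
    (hψlt : ∀ z ∈ Set.Icc (0 : ℝ) d, |ψ z| < 1)
    (hψ''lt : ∀ z ∈ Set.Icc (0 : ℝ) d, |ψ'' z| < c₁)
    (k : ℕ) (κ : ℕ → ℝ)
    (hκ1 : 0 < κ 1)
    (hκmono : ∀ ν ∈ Finset.Icc 1 k, κ ν < κ (ν + 1))
    (r : ℕ) (hr : r ∈ Finset.Icc 1 k) :
    (∑ ν ∈ Finset.Icc 1 r,
        ∫ z in Set.Icc (0 : ℝ) d,
          (if κ ν ≤ |ψ z| ∧ |ψ z| < κ (ν + 1) then |ψ' z| else 0)) <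
      (d * (1 + 4 * c₁) + 2) * Real.sqrt (κ (r + 1)) := by
  have hκ : ∀ ν ∈ Finset.Icc 1 r, κ ν ≤ κ (ν + 1) := fun ν hν =>
    (hκmono ν (Finset.Icc_subset_Icc_right (Finset.mem_Icc.1 hr).2 hν)).le
  have hψc : ContinuousOn ψ (Icc 0 d) := fun z hz => (hψ' z hz).continuousWithinAt
  have hψ'c : ContinuousOn ψ' (Icc 0 d) := fun z hz => (hψ'' z hz).continuousWithinAt
  rw [← integral_finsetSum _ fun ν _ => integrableOn_ite_abs
    (p := fun x => κ ν ≤ |x| ∧ |x| < κ (ν + 1))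
    ((measurableSet_le measurable_const measurable_abs).inter
      (measurableSet_lt measurable_abs measurable_const)) hψc hψ'c]
  calc _ ≤ ∫ z in Icc 0 d, (if |ψ z| < κ (r + 1) then |ψ' z| else 0) :=
        integral_mono_of_nonneg
          (Filter.Eventually.of_forall fun z => Finset.sum_nonneg fun ν _ => by positivity)
          (integrableOn_ite_abs (p := (|·| < κ (r + 1)))
            (measurableSet_lt measurable_abs measurable_const) hψc hψ'c)
          (Filter.Eventually.of_forall fun z => sum_ite_le_ite_lt (abs_nonneg _) hκ)
    _ < _ := integral_ite_abs_deriv_lt hd hc₁.le hψ' hψ'' (fun z hz => (hψlt z hz).le)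
        (fun z hz => (hψ''lt z hz).le) (hκ1.trans_le (le_of_forall_Icc_le_succ hκ))

/-- The partial sums `(Δψ)₁ + ⋯ + (Δψ)_r` are dominated by `c₂ √κ_{r+1}`: for any partition
`0 < κ₁ < ⋯ < κ_{k+1} ≤ 1` and any `1 ≤ r ≤ k`,
`∑_{ν=1}^r ∫₀^d |ψ'| · 𝟙{κ_ν ≤ |ψ| < κ_{ν+1}} dz < (d(1+4c₁)+2) √κ_{r+1}`. -/
theorem stmt_10 (d c₁ : ℝ) (hd : 0 < d) (hc₁ : 0 < c₁)
    (ψ ψ' ψ'' : ℝ → ℝ)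
    (hψ' : ∀ z ∈ Set.Icc (0 : ℝ) d, HasDerivWithinAt ψ (ψ' z) (Set.Icc 0 d) z)
    (hψ'' : ∀ z ∈ Set.Icc (0 : ℝ) d, HasDerivWithinAt ψ' (ψ'' z) (Set.Icc 0 d) z)
    (hψlt : ∀ z ∈ Set.Icc (0 : ℝ) d, |ψ z| < 1)
    (hψ''lt : ∀ z ∈ Set.Icc (0 : ℝ) d, |ψ'' z| < c₁)
    (k : ℕ) (hk : 1 ≤ k) (κ : ℕ → ℝ)
    (hκ1 : 0 < κ 1)
    (hκmono : ∀ ν ∈ Finset.Icc 1 k, κ ν < κ (ν + 1))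
    (hκtop : κ (k + 1) ≤ 1)
    (r : ℕ) (hr : r ∈ Finset.Icc 1 k) :
    (∑ ν ∈ Finset.Icc 1 r,
        ∫ z in Set.Icc (0 : ℝ) d,
          (if κ ν ≤ |ψ z| ∧ |ψ z| < κ (ν + 1) then |ψ' z| else 0)) <
      (d * (1 + 4 * c₁) + 2) * Real.sqrt (κ (r + 1)) :=
  stmt_10_general d c₁ hd hc₁ ψ ψ' ψ'' hψ' hψ'' hψlt hψ''lt k κ hκ1 hκmono r hr
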